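/- arXiv:2211.11967 — 6 statements merged into one kernel-verified Lean document; each statement's English description precedes it below -/
import Mathlib

section
/- Let U be a finite nonempty set and let f : U → ℝ be a function with f(i) ≠ 0 for all i ∈ U. Then the number of subsets T ⊆ U with ∑_{i∈T} f(i) ≠ 0 is at least 2^|U| / 2. -/
/-!
Toggling a fixed element `a ∈ U` with `f a ≠ 0` changes `∑ i ∈ T, f i`, so it never maps a
zero-sum subset of `U` to another one. Toggling is an injection of the powerset of `U` into itself,
so the zero-sum subsets, an independent set of the hypercube, are at most half of all subsets.
-/

open Finset

namespace Finset

variable {α : Type*} [DecidableEq α]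

lemma symmDiff_singleton_of_mem {T : Finset α} {a : α} (ha : a ∈ T) :
    symmDiff T {a} = T.erase a := by
  ext x
  by_cases hx : x = a <;> simp [mem_symmDiff, hx, ha]

lemma symmDiff_singleton_of_notMem {T : Finset α} {a : α} (ha : a ∉ T) :
    symmDiff T {a} = insert a T := by
  ext x
  by_cases hx : x = a <;> simp [mem_symmDiff, hx, ha]

lemma sum_symmDiff_singleton_ne {M : Type*} [AddCancelCommMonoid M] {f : α → M} {a : α}
    (hfa : f a ≠ 0) (T : Finset α) : ∑ i ∈ symmDiff T {a}, f i ≠ ∑ i ∈ T, f i := by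
  by_cases ha : a ∈ T
  · rw [symmDiff_singleton_of_mem ha, ← add_sum_erase T f ha]
    simpa [eq_comm] using hfa
  · rw [symmDiff_singleton_of_notMem ha, sum_insert ha]
    simpa using hfa

lemma two_mul_card_le_of_symmDiff_singleton_notMem {U : Finset α} {𝒜 : Finset (Finset α)}
    {a : α} (h𝒜 : 𝒜 ⊆ U.powerset) (ha : a ∈ U) (hind : ∀ T ∈ 𝒜, symmDiff T {a} ∉ 𝒜) :
    2 * #𝒜 ≤ 2 ^ #U := by
  have hinj : #𝒜 ≤ #(U.powerset \ 𝒜) := by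
    refine card_le_card_of_injOn (fun T => symmDiff T {a}) (fun T hT => ?_)
      (symmDiff_left_injective _).injOn
    have hTU : T ⊆ U := mem_powerset.mp (h𝒜 hT)
    refine mem_sdiff.mpr ⟨mem_powerset.mpr ?_, hind T hT⟩
    exact symmDiff_le_sup.trans (union_subset hTU (singleton_subset_iff.mpr ha))
  rw [card_sdiff_of_subset h𝒜, card_powerset] at hinj
  have := card_le_card h𝒜
  rw [card_powerset] at this
  omega

end Finset

theorem stmt_0 {ι : Type*} [DecidableEq ι] (U : Finset ι) (hU : U.Nonempty)
    (f : ι → ℝ) (hf : ∀ i ∈ U, f i ≠ 0) :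
    (2 : ℝ) ^ U.card / 2 ≤
      ((U.powerset.filter (fun T => ∑ i ∈ T, f i ≠ 0)).card : ℝ) := by
  obtain ⟨a, ha⟩ := hU
  set 𝒵 := U.powerset.filter (fun T => ∑ i ∈ T, f i = 0)
  set 𝒩 := U.powerset.filter (fun T => ∑ i ∈ T, f i ≠ 0)
  have hzero : 2 * #𝒵 ≤ 2 ^ #U := by
    refine two_mul_card_le_of_symmDiff_singleton_notMem (filter_subset _ _) ha fun T hT hT' => ?_
    exact sum_symmDiff_singleton_ne (hf a ha) T
      (((mem_filter.mp hT').2).trans ((mem_filter.mp hT).2).symm)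
  have hsplit : #𝒵 + #𝒩 = 2 ^ #U := by
    rw [← card_powerset]
    exact card_filter_add_card_filter_not _
  have : (2 : ℝ) ^ #U ≤ 2 * #𝒩 := by exact_mod_cast (by omega : 2 ^ #U ≤ 2 * #𝒩)
  linarith
end

section
/- Let U be a finite nonempty set, m a positive integer, and f : U → ℝ such that f(i) is not an integer multiple of 1/m for any i ∈ U. Then the number of subsets T ⊆ U such that ∑_{i∈T} f(i) is not an integer multiple of 1/m is at least 2^|U| / 2. -/
open scoped Classical
theorem stmt_1 {ι : Type*} [DecidableEq ι] (U : Finset ι) (hU : U.Nonempty)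
    (m : ℕ) (hm : 0 < m) (f : ι → ℝ)
    (hf : ∀ i ∈ U, ¬ ∃ k : ℤ, f i = (k : ℝ) / m) :
    (2 : ℝ) ^ U.card / 2 ≤
      ((U.powerset.filter (fun T => ¬ ∃ k : ℤ, ∑ i ∈ T, f i = (k : ℝ) / m)).card : ℝ) := by
  obtain ⟨j, hj⟩ := hU
  set bad : Finset ι → Prop := fun T => ¬ ∃ k : ℤ, ∑ i ∈ T, f i = (k : ℝ) / m with hbad
  set F := U.powerset.filter (fun T => ¬ ∃ k : ℤ, ∑ i ∈ T, f i = (k : ℝ) / m) with hF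
  have key : ∀ T ∈ (U.erase j).powerset, ¬ bad T → bad (insert j T) := by
    intro T hT hnb
    simp only [hbad, not_not] at hnb
    obtain ⟨k', hk'⟩ := hnb
    simp only [Finset.mem_powerset] at hT
    have hjT : j ∉ T := fun h => (Finset.mem_erase.mp (hT h)).1 rfl
    rintro ⟨k, hk⟩
    rw [Finset.sum_insert hjT, hk'] at hk
    exact hf j hj ⟨k - k', by push_cast; rw [sub_div]; linarith⟩
  have hmap : ∀ T ∈ (U.erase j).powerset,
      (if bad T then T else insert j T) ∈ F := by
    intro T hT
    simp only [Finset.mem_powerset] at hT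
    have hTU : T ⊆ U := hT.trans (Finset.erase_subset _ _)
    by_cases hb : bad T
    · rw [if_pos hb]
      simp only [F, Finset.mem_filter, Finset.mem_powerset]
      exact ⟨hTU, hb⟩
    · rw [if_neg hb]
      have := key T (Finset.mem_powerset.mpr hT) hb
      simp only [F, Finset.mem_filter, Finset.mem_powerset]
      exact ⟨Finset.insert_subset hj hTU, this⟩
  have hinj : ∀ T₁ ∈ (U.erase j).powerset, ∀ T₂ ∈ (U.erase j).powerset,
      (if bad T₁ then T₁ else insert j T₁) = (if bad T₂ then T₂ else insert j T₂) →
      T₁ = T₂ := by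
    intro T₁ h₁ T₂ h₂ h
    simp only [Finset.mem_powerset] at h₁ h₂
    have hj1 : j ∉ T₁ := fun h => (Finset.mem_erase.mp (h₁ h)).1 rfl
    have hj2 : j ∉ T₂ := fun h => (Finset.mem_erase.mp (h₂ h)).1 rfl
    by_cases b1 : bad T₁ <;> by_cases b2 : bad T₂
    · rw [if_pos b1, if_pos b2] at h; exact h
    · rw [if_pos b1, if_neg b2] at h
      exact absurd (h ▸ Finset.mem_insert_self j T₂) hj1
    · rw [if_neg b1, if_pos b2] at h
      exact absurd (h ▸ Finset.mem_insert_self j T₁) hj2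
    · rw [if_neg b1, if_neg b2] at h
      have := congrArg (Finset.erase · j) h
      simpa [Finset.erase_insert hj1, Finset.erase_insert hj2] using this
  have hcard : (U.erase j).powerset.card ≤ F.card :=
    Finset.card_le_card_of_injOn _ hmap fun a ha b hb => hinj a ha b hb
  have hpow : (U.erase j).powerset.card = 2 ^ (U.card - 1) := by
    rw [Finset.card_powerset, Finset.card_erase_of_mem hj]
  have hUc : 1 ≤ U.card := Finset.card_pos.mpr ⟨j, hj⟩
  have : (2 : ℝ) ^ U.card / 2 = (2 : ℝ) ^ (U.card - 1) := by
    rw [div_eq_iff (by norm_num : (2:ℝ) ≠ 0), ← pow_succ, Nat.sub_add_cancel hUc]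
  rw [this]
  calc (2 : ℝ) ^ (U.card - 1) = ((2 ^ (U.card - 1) : ℕ) : ℝ) := by push_cast; ring
    _ ≤ F.card := by exact_mod_cast hpow ▸ hcard
end

section
/- Let D and D' be two distinct probability distributions on a finite set [n] (i.e., D(i) ≠ D'(i) for some i). If S ⊆ [n] is a uniformly random subset (each element included independently with probability 1/2), then Pr[D(S) ≠ D'(S)] ≥ 1/2, where D(S) = ∑_{i∈S} D(i). -/
/-! Toggling a fixed coordinate `i` with `D i ≠ D' i` is an involution on subsets of `[n]` that
sends every `S` with `D(S) = D'(S)` to one with `D(S) ≠ D'(S)`, so the latter make up at least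
half of all subsets. -/

open Finset

namespace Finset

variable {ι M : Type*} [DecidableEq ι]

theorem symmDiff_singleton_of_mem_s2 {S : Finset ι} {i : ι} (h : i ∈ S) :
    symmDiff S {i} = S.erase i := by
  ext j
  by_cases hj : j = i <;> simp_all [mem_symmDiff]

theorem symmDiff_singleton_of_notMem_s2 {S : Finset ι} {i : ι} (h : i ∉ S) :
    symmDiff S {i} = insert i S := by
  ext j
  by_cases hj : j = i <;> simp_all [mem_symmDiff]

variable [AddCancelCommMonoid M] {f g : ι → M}

theorem sum_symmDiff_singleton_ne_s2 {S : Finset ι} {i : ι} (hi : f i ≠ g i)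
    (hS : ∑ j ∈ S, f j = ∑ j ∈ S, g j) :
    ∑ j ∈ symmDiff S {i}, f j ≠ ∑ j ∈ symmDiff S {i}, g j := by
  by_cases hiS : i ∈ S
  · rw [symmDiff_singleton_of_mem_s2 hiS]
    intro h
    rw [← sum_erase_add _ _ hiS, ← sum_erase_add _ _ hiS, h] at hS
    exact hi (add_left_cancel hS)
  · rw [symmDiff_singleton_of_notMem_s2 hiS, sum_insert hiS, sum_insert hiS, hS]
    exact fun h => hi (add_right_cancel h)

theorem two_pow_card_le_two_mul_card_filter_sum_ne [Fintype ι] [DecidableEq M] (h : f ≠ g) :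
    2 ^ Fintype.card ι ≤
      2 * #{S ∈ (univ : Finset ι).powerset | ∑ j ∈ S, f j ≠ ∑ j ∈ S, g j} := by
  obtain ⟨i, hi⟩ := Function.ne_iff.mp h
  have htoggle : #{S ∈ (univ : Finset ι).powerset | ¬∑ j ∈ S, f j ≠ ∑ j ∈ S, g j} ≤
      #{S ∈ (univ : Finset ι).powerset | ∑ j ∈ S, f j ≠ ∑ j ∈ S, g j} := by
    refine card_le_card_of_injOn (symmDiff · {i}) (fun S hS => ?_) ?_
    · simp only [coe_filter, Set.mem_ofPred_eq, not_not] at hS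
      simpa using sum_symmDiff_singleton_ne_s2 hi hS.2
    · intro S _ T _ hST
      simpa using congrArg (symmDiff · {i}) hST
  have hsplit := card_filter_add_card_filter_not (s := (univ : Finset ι).powerset)
    (fun S => ∑ j ∈ S, f j ≠ ∑ j ∈ S, g j)
  rw [card_powerset, card_univ] at hsplit
  omega

end Finset

theorem stmt_2_general {n : ℕ} (D D' : Fin n → ℝ)
    (hne : D ≠ D') :
    (1 : ℝ) / 2 ≤
      (((Finset.univ : Finset (Fin n)).powerset.filter
          (fun S => ∑ i ∈ S, D i ≠ ∑ i ∈ S, D' i)).card : ℝ) / 2 ^ n := by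
  have h : (2 : ℝ) ^ n ≤ 2 * (((Finset.univ : Finset (Fin n)).powerset.filter
      (fun S => ∑ i ∈ S, D i ≠ ∑ i ∈ S, D' i)).card : ℝ) := by
    exact_mod_cast Fintype.card_fin n ▸ two_pow_card_le_two_mul_card_filter_sum_ne hne
  rw [div_le_div_iff₀ two_pos (by positivity)]
  linarith

/-- If `D ≠ D'` are two probability distributions on `Fin n`, then a uniformly random
subset `S ⊆ [n]` (each element included independently with probability `1/2`) satisfies
`D(S) ≠ D'(S)` with probability at least `1/2`. The probability is expressed as the
fraction of subsets `S` with `∑_{i∈S} D(i) ≠ ∑_{i∈S} D'(i)`. -/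
theorem stmt_2 {n : ℕ} (D D' : Fin n → ℝ)
    (hD0 : ∀ i, 0 ≤ D i) (hD'0 : ∀ i, 0 ≤ D' i)
    (hD1 : ∑ i, D i = 1) (hD'1 : ∑ i, D' i = 1)
    (hne : D ≠ D') :
    (1 : ℝ) / 2 ≤
      (((Finset.univ : Finset (Fin n)).powerset.filter
          (fun S => ∑ i ∈ S, D i ≠ ∑ i ∈ S, D' i)).card : ℝ) / 2 ^ n :=
  stmt_2_general D D' hne
end

section
/- Let D be a probability distribution on a finite set [n] that is not m-grained, i.e., some D(i) is not an integer multiple of 1/m. If S ⊆ [n] is a uniformly random subset (each element included independently with probability 1/2), then with probability at least 1/2, D(S) = ∑_{i∈S} D(i) is not an integer multiple of 1/m. -/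
open scoped Classical
/-- If `D` is a probability distribution on `Fin n` that is not `m`-grained
(some `D i` is not an integer multiple of `1/m`), then a uniformly random subset `S`
satisfies, with probability at least `1/2`, that `D(S)` is not an integer multiple of `1/m`. -/
theorem stmt_3 {n : ℕ} (m : ℕ) (hm : 0 < m) (D : Fin n → ℝ)
    (hD0 : ∀ i, 0 ≤ D i) (hD1 : ∑ i, D i = 1)
    (hng : ∃ i, ¬ ∃ k : ℤ, D i = (k : ℝ) / m) :
    (1 : ℝ) / 2 ≤
      (((Finset.univ : Finset (Fin n)).powerset.filter
          (fun S => ¬ ∃ k : ℤ, ∑ i ∈ S, D i = (k : ℝ) / m)).card : ℝ) / 2 ^ n := by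
  classical
  obtain ⟨i₀, hi₀⟩ := hng
  set P := (Finset.univ : Finset (Fin n)).powerset with hP
  set p : Finset (Fin n) → Prop := fun S => ∃ k : ℤ, ∑ i ∈ S, D i = (k : ℝ) / m with hp
  have hmaps : ∀ S ∈ P.filter p, symmDiff S {i₀} ∈ P.filter (fun S => ¬ p S) := by
    intro S hS
    rw [Finset.mem_filter] at hS ⊢
    refine ⟨Finset.mem_powerset.2 (Finset.subset_univ _), ?_⟩
    obtain ⟨k, hk⟩ := hS.2
    rintro ⟨k', hk'⟩
    by_cases h : i₀ ∈ S
    · have hsd : symmDiff S ({i₀} : Finset (Fin n)) = S.erase i₀ := by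
        ext x
        simp only [Finset.mem_symmDiff, Finset.mem_singleton, Finset.mem_erase]
        constructor
        · rintro (⟨hx, hx'⟩ | ⟨rfl, hx'⟩)
          · exact ⟨hx', hx⟩
          · exact absurd h hx'
        · rintro ⟨hx, hx'⟩; exact Or.inl ⟨hx', hx⟩
      rw [hsd, Finset.sum_erase_eq_sub h, hk] at hk'
      exact hi₀ ⟨k - k', by push_cast; rw [sub_div]; linarith⟩
    · have hsd : symmDiff S ({i₀} : Finset (Fin n)) = insert i₀ S := by
        ext x
        simp only [Finset.mem_symmDiff, Finset.mem_singleton, Finset.mem_insert]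
        constructor
        · rintro (⟨hx, _⟩ | ⟨rfl, _⟩)
          · exact Or.inr hx
          · exact Or.inl rfl
        · rintro (rfl | hx)
          · exact Or.inr ⟨rfl, h⟩
          · exact Or.inl ⟨hx, fun hx' => h (hx' ▸ hx)⟩
      rw [hsd, Finset.sum_insert h, hk] at hk'
      exact hi₀ ⟨k' - k, by push_cast; rw [sub_div]; linarith⟩
  have hinj : Set.InjOn (fun S => symmDiff S ({i₀} : Finset (Fin n))) (P.filter p) := by
    intro S _ T _ h
    have := congrArg (symmDiff · ({i₀} : Finset (Fin n))) h
    simpa [symmDiff_symmDiff_cancel_right] using this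
  have hcard : (P.filter p).card ≤ (P.filter (fun S => ¬ p S)).card :=
    Finset.card_le_card_of_injOn _ hmaps hinj
  have hsum : (P.filter p).card + (P.filter (fun S => ¬ p S)).card = 2 ^ n := by
    rw [Finset.card_filter_add_card_filter_not, hP, Finset.card_powerset,
      Finset.card_univ, Fintype.card_fin]
  have h2 : 2 ^ n ≤ 2 * (P.filter (fun S => ¬ p S)).card := by omega
  have hpos : (0 : ℝ) < 2 ^ n := by positivity
  rw [div_le_div_iff₀ (by norm_num) hpos]
  calc (1 : ℝ) * 2 ^ n = (2 ^ n : ℕ) := by push_cast; ring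
    _ ≤ ((2 * (P.filter (fun S => ¬ p S)).card : ℕ) : ℝ) := by exact_mod_cast h2
    _ = ((P.filter (fun S => ¬ p S)).card : ℝ) * 2 := by push_cast; ring
end

section
/- Let h : [n] → {−1, 1} be a 4-wise independent random hash function and let D be a probability distribution on [n]. Define X = (∑_{j∈[n]} h(j) D(j))². Then E[X] = ∑_{j∈[n]} D(j)². -/
/-!
Expanding the square, `E[(∑ⱼ h(j) D(j))²] = ∑ᵢ ∑ⱼ D(i) D(j) E[h(i) h(j)]`. The diagonal terms have
`h(i)² = 1`, and for `i ≠ j` independence of the pair gives `E[h(i) h(j)] = E[h(i)] E[h(j)] = 0`,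
since a uniform sign has mean zero. So the `h(j)` are orthonormal in `L²(μ)`, and only the
diagonal `∑ⱼ D(j)²` survives.
-/

open MeasureTheory ProbabilityTheory Finset

theorem integral_sq_sum_mul_of_orthonormal {Ω ι : Type*} [MeasurableSpace Ω] {μ : Measure Ω}
    [Fintype ι] [DecidableEq ι] (X : ι → Ω → ℝ)
    (hint : ∀ i j, Integrable (fun ω => X i ω * X j ω) μ)
    (horth : ∀ i j, ∫ ω, X i ω * X j ω ∂μ = if i = j then 1 else 0) (c : ι → ℝ) :
    ∫ ω, (∑ j, X j ω * c j) ^ 2 ∂μ = ∑ j, c j ^ 2 := by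
  have hexpand : ∀ ω, (∑ j, X j ω * c j) ^ 2 = ∑ i, ∑ j, c i * c j * (X i ω * X j ω) := by
    intro ω
    rw [sq, sum_mul_sum]
    exact sum_congr rfl fun i _ => sum_congr rfl fun j _ => by ring
  simp_rw [hexpand]
  rw [integral_finsetSum _ fun i _ => integrable_finsetSum _ fun j _ => (hint i j).const_mul _]
  refine sum_congr rfl fun i _ => ?_
  rw [integral_finsetSum _ fun j _ => (hint i j).const_mul _]
  simp [integral_const_mul, horth, sq]

section Sign

variable {Ω : Type*} {X Y : Ω → ℝ}

lemma mul_self_eq_one_of_sign (hX : ∀ ω, X ω = 1 ∨ X ω = -1) (ω : Ω) : X ω * X ω = 1 := by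
  rcases hX ω with h | h <;> simp [h]

lemma mul_sign_of_sign (hX : ∀ ω, X ω = 1 ∨ X ω = -1) (hY : ∀ ω, Y ω = 1 ∨ Y ω = -1) (ω : Ω) :
    X ω * Y ω = 1 ∨ X ω * Y ω = -1 := by
  rcases hX ω with h | h <;> rcases hY ω with h' | h' <;> simp [h, h']

variable [MeasurableSpace Ω] {μ : Measure Ω}

lemma integrable_of_sign [IsFiniteMeasure μ] (hXm : Measurable X)
    (hX : ∀ ω, X ω = 1 ∨ X ω = -1) : Integrable X μ :=
  Integrable.of_bound hXm.aestronglyMeasurable 1 <| Filter.Eventually.of_forall fun ω => by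
    rcases hX ω with h | h <;> simp [h]

lemma integral_eq_zero_of_sign [IsProbabilityMeasure μ] (hXm : Measurable X)
    (hX : ∀ ω, X ω = 1 ∨ X ω = -1) (hhalf : μ {ω | X ω = 1} = 1 / 2) : ∫ ω, X ω ∂μ = 0 := by
  have hset : MeasurableSet {ω | X ω = 1} := hXm (measurableSet_singleton 1)
  have hX_eq : X = fun ω => 2 * {ω | X ω = 1}.indicator 1 ω - 1 := by
    funext ω
    rcases hX ω with h | h
    · norm_num [h]
    · rw [Set.indicator_of_notMem (by norm_num [h])]
      simp [h]
  rw [hX_eq, integral_sub ((integrable_const 1).indicator hset |>.const_mul 2)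
    (integrable_const 1), integral_const_mul, integral_indicator_one hset, measureReal_def, hhalf]
  simp

end Sign

lemma indepFun_of_forall_card_le {Ω ι β : Type*} [MeasurableSpace Ω] [MeasurableSpace β]
    {μ : Measure Ω} {X : ι → Ω → β} {k : ℕ} (hk : 2 ≤ k)
    (hind : ∀ s : Finset ι, #s ≤ k → iIndepFun (fun (j : s) ω => X j ω) μ)
    {i j : ι} (hij : i ≠ j) : IndepFun (X i) (X j) μ := by
  classical
  have hcard : #{i, j} ≤ k := card_le_two.trans hk
  exact (hind {i, j} hcard).indepFun (i := ⟨i, by simp⟩) (j := ⟨j, by simp⟩)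
    fun h => hij (congrArg Subtype.val h)

lemma integral_mul_eq_ite_of_indep_sign {Ω ι : Type*} [MeasurableSpace Ω] {μ : Measure Ω}
    [IsProbabilityMeasure μ] [DecidableEq ι] {X : ι → Ω → ℝ} (hXm : ∀ j, Measurable (X j))
    (hX : ∀ j ω, X j ω = 1 ∨ X j ω = -1) (hhalf : ∀ j, μ {ω | X j ω = 1} = 1 / 2)
    (hindep : Pairwise fun i j => IndepFun (X i) (X j) μ) (i j : ι) :
    ∫ ω, X i ω * X j ω ∂μ = if i = j then 1 else 0 := by
  split_ifs with hij
  · subst hij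
    simp [mul_self_eq_one_of_sign (hX i)]
  · have hprod := (hindep hij).integral_mul_eq_mul_integral
      (hXm i).aestronglyMeasurable (hXm j).aestronglyMeasurable
    simp only [Pi.mul_apply] at hprod
    rw [hprod, integral_eq_zero_of_sign (hXm i) (hX i) (hhalf i), zero_mul]

theorem stmt_5_general {Ω : Type*} [MeasurableSpace Ω] (μ : Measure Ω) [IsProbabilityMeasure μ]
    {n : ℕ} (h : Ω → Fin n → ℝ)
    (hmeas : ∀ j, Measurable (fun ω => h ω j))
    (hval : ∀ ω j, h ω j = 1 ∨ h ω j = -1)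
    (hunif : ∀ j, μ {ω | h ω j = 1} = 1 / 2)
    (h4wise : ∀ s : Finset (Fin n), s.card ≤ 4 →
      iIndepFun (fun (j : s) ω => h ω j) μ)
    (D : Fin n → ℝ) :
    ∫ ω, (∑ j, h ω j * D j) ^ 2 ∂μ = ∑ j, (D j) ^ 2 := by
  have hsign : ∀ j ω, h ω j = 1 ∨ h ω j = -1 := fun j ω => hval ω j
  have hpair : Pairwise fun i j => IndepFun (fun ω => h ω i) (fun ω => h ω j) μ :=
    fun i j hij => indepFun_of_forall_card_le (X := fun j ω => h ω j) (by norm_num) h4wise hij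
  exact integral_sq_sum_mul_of_orthonormal (fun j ω => h ω j)
    (fun i j => integrable_of_sign ((hmeas i).mul (hmeas j)) (mul_sign_of_sign (hsign i) (hsign j)))
    (integral_mul_eq_ite_of_indep_sign hmeas hsign hunif hpair) D

/-- If `h : [n] → {−1,1}` is a 4-wise independent uniform random hash function and `D` is a
probability distribution on `[n]`, then `E[(∑_j h(j)·D(j))²] = ∑_j D(j)²`. -/
theorem stmt_5 {Ω : Type*} [MeasurableSpace Ω] (μ : Measure Ω) [IsProbabilityMeasure μ]
    {n : ℕ} (h : Ω → Fin n → ℝ)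
    (hmeas : ∀ j, Measurable (fun ω => h ω j))
    (hval : ∀ ω j, h ω j = 1 ∨ h ω j = -1)
    (hunif : ∀ j, μ {ω | h ω j = 1} = 1 / 2)
    (h4wise : ∀ s : Finset (Fin n), s.card ≤ 4 →
      iIndepFun (fun (j : s) ω => h ω j) μ)
    (D : Fin n → ℝ) (hD0 : ∀ j, 0 ≤ D j) (hD1 : ∑ j, D j = 1) :
    ∫ ω, (∑ j, h ω j * D j) ^ 2 ∂μ = ∑ j, (D j) ^ 2 :=
  stmt_5_general μ h hmeas hval hunif h4wise D
end

section
/- Any deterministic algorithm making t adaptive queries to a SET-EVAL oracle (which on input A ⊆ [n] returns D(A) = ∑_{i∈A} D(i)) can be simulated by an algorithm making at most 2^t SET-EVAL queries such that the family of all queried sets is laminar (any two queried sets are disjoint or one contains the other). -/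
/-- The sequence of answers obtained by running a deterministic adaptive `SET-EVAL`
algorithm (given by its query function) on a distribution `D`: the `i`-th answer is
`D(A_i) = ∑_{j ∈ A_i} D j`, where the `i`-th queried set `A_i` may depend on all
previous answers. -/
noncomputable def ansRun {n t : ℕ} (D : Fin n → ℝ)
    (query : (i : Fin t) → ((k : Fin i) → ℝ) → Finset (Fin n)) : Fin t → ℝ
  | i => ∑ j ∈ query i (fun k => ansRun D query ⟨k.1, k.2.trans i.2⟩), D j
  termination_by i => i.1
  decreasing_by exact k.2

/-- The `i`-th set queried when running the algorithm on `D`. -/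
noncomputable def queriedSet {n t : ℕ} (D : Fin n → ℝ)
    (query : (i : Fin t) → ((k : Fin i) → ℝ) → Finset (Fin n)) (i : Fin t) :
    Finset (Fin n) :=
  query i (fun k => ansRun D query ⟨k.1, k.2.trans i.2⟩)

/-- A family of sets is laminar if any two members are disjoint or nested. -/
def IsLaminar {α : Type*} [DecidableEq α] (F : Set (Finset α)) : Prop :=
  ∀ A ∈ F, ∀ B ∈ F, A ∩ B = ∅ ∨ A ⊆ B ∨ B ⊆ A

namespace Stmt17

lemma ansRun_eq {n t : ℕ} (D : Fin n → ℝ)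
    (query : (i : Fin t) → ((k : Fin i) → ℝ) → Finset (Fin n)) (i : Fin t) :
    ansRun D query i = ∑ j ∈ queriedSet D query i, D j := by
  rw [ansRun]; rfl

/-- Existence and uniqueness of a number with prescribed bits below `i`. -/
lemma exists_bits (i : ℕ) (P : ℕ → Prop) [DecidablePred P] :
    ∃ s, s < 2 ^ i ∧ ∀ j < i, (P j ↔ Nat.testBit s j = true) := by
  induction i with
  | zero => exact ⟨0, by simp⟩
  | succ i ih =>
    obtain ⟨s, hs, hbits⟩ := ih
    by_cases hP : P i
    · refine ⟨2 ^ i + s, ?_, ?_⟩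
      · have : (2:ℕ) ^ (i+1) = 2 ^ i + 2 ^ i := by ring
        omega
      · intro j hj
        rcases Nat.lt_succ_iff_lt_or_eq.1 hj with hj' | rfl
        · rw [Nat.testBit_two_pow_add_gt hj']
          exact hbits j hj'
        · rw [Nat.testBit_two_pow_add_eq, Nat.testBit_lt_two_pow hs]
          simpa using hP
    · refine ⟨s, lt_of_lt_of_le hs (Nat.pow_le_pow_right (by norm_num) (Nat.le_succ i)), ?_⟩
      intro j hj
      rcases Nat.lt_succ_iff_lt_or_eq.1 hj with hj' | rfl
      · exact hbits j hj'
      · rw [Nat.testBit_lt_two_pow hs]; simpa using hP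

lemma unique_bits {i s₁ s₂ : ℕ} (h₁ : s₁ < 2 ^ i) (h₂ : s₂ < 2 ^ i)
    (h : ∀ j < i, Nat.testBit s₁ j = Nat.testBit s₂ j) : s₁ = s₂ := by
  apply Nat.eq_of_testBit_eq
  intro j
  rcases lt_or_ge j i with hj | hj
  · exact h j hj
  · rw [Nat.testBit_lt_two_pow (lt_of_lt_of_le h₁ (Nat.pow_le_pow_right (by norm_num) hj)),
      Nat.testBit_lt_two_pow (lt_of_lt_of_le h₂ (Nat.pow_le_pow_right (by norm_num) hj))]

variable {n t : ℕ}

/-- The atom of the family `A 0, …, A (i-1)` inside `A i` with sign pattern `s`. -/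
def atomSet (A : ℕ → Finset (Fin n)) (i s : ℕ) : Finset (Fin n) :=
  (A i).filter (fun x => ∀ j < i, (x ∈ A j ↔ Nat.testBit s j = true))

lemma mem_atomSet {A : ℕ → Finset (Fin n)} {i s : ℕ} {x : Fin n} :
    x ∈ atomSet A i s ↔ x ∈ A i ∧ ∀ j < i, (x ∈ A j ↔ Nat.testBit s j = true) := by
  simp [atomSet]

lemma atomSet_congr {A B : ℕ → Finset (Fin n)} {i s : ℕ} (h : ∀ j ≤ i, A j = B j) :
    atomSet A i s = atomSet B i s := by
  ext x
  simp only [mem_atomSet, h i le_rfl]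
  refine and_congr_right fun _ => ?_
  exact forall₂_congr fun j hj => by rw [h j hj.le]

/-- The atoms with patterns `s < 2^i` partition `A i`. -/
lemma sum_atomSet (A : ℕ → Finset (Fin n)) (i : ℕ) (D : Fin n → ℝ) :
    ∑ s ∈ Finset.range (2 ^ i), ∑ x ∈ atomSet A i s, D x = ∑ x ∈ A i, D x := by
  unfold atomSet
  rw [Finset.sum_comm' (s := Finset.range (2 ^ i)) (t := fun s => (A i).filter _)
    (t' := A i) (s' := fun x => (Finset.range (2 ^ i)).filter
      (fun s => ∀ j < i, (x ∈ A j ↔ Nat.testBit s j = true)))]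
  · apply Finset.sum_congr rfl
    intro x hx
    obtain ⟨s₀, hs₀, hbits⟩ := exists_bits i (fun j => x ∈ A j)
    have : (Finset.range (2 ^ i)).filter
        (fun s => ∀ j < i, (x ∈ A j ↔ Nat.testBit s j = true)) = {s₀} := by
      ext s
      simp only [Finset.mem_filter, Finset.mem_range, Finset.mem_singleton]
      constructor
      · rintro ⟨hs, hb⟩
        refine unique_bits hs hs₀ (fun j hj => ?_)
        have h' : (Nat.testBit s j = true) ↔ (Nat.testBit s₀ j = true) :=
          (hb j hj).symm.trans (hbits j hj)
        simpa using h'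
      · rintro rfl; exact ⟨hs₀, hbits⟩
    rw [this, Finset.sum_singleton]
  · intro s x
    simp only [Finset.mem_filter, Finset.mem_range]
    tauto

/-- Laminarity of atoms. -/
lemma atom_laminar (A : ℕ → Finset (Fin n)) {i s i' s' : ℕ} (hii' : i ≤ i') :
    atomSet A i s ∩ atomSet A i' s' = ∅ ∨ atomSet A i' s' ⊆ atomSet A i s := by
  by_cases h : (atomSet A i s ∩ atomSet A i' s').Nonempty
  · right
    obtain ⟨x, hx⟩ := h
    rw [Finset.mem_inter, mem_atomSet, mem_atomSet] at hx
    obtain ⟨⟨hxi, hxb⟩, ⟨hxi', hxb'⟩⟩ := hx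
    intro y hy
    rw [mem_atomSet] at hy ⊢
    obtain ⟨hyi', hyb'⟩ := hy
    rcases eq_or_lt_of_le hii' with rfl | hlt
    · refine ⟨hyi', fun j hj => ?_⟩
      rw [hyb' j hj, ← hxb' j hj, hxb j hj]
    · have hbit : Nat.testBit s' i = true := (hxb' i hlt).1 hxi
      refine ⟨(hyb' i hlt).2 hbit, fun j hj => ?_⟩
      rw [hyb' j (hj.trans hlt), ← hxb' j (hj.trans hlt), hxb j hj]
  · left
    exact Finset.not_nonempty_iff_eq_empty.1 h

variable (query : (i : Fin t) → ((k : Fin i) → ℝ) → Finset (Fin n))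

/-- The answers of the original run, reconstructed from (extended) simulated answers. -/
noncomputable def origAns (g : ℕ → ℝ) (k : ℕ) : ℝ :=
  ∑ s ∈ Finset.range (2 ^ k), g (2 ^ k + s)

/-- The sets queried by the original run, reconstructed from simulated answers. -/
noncomputable def origSets (g : ℕ → ℝ) (i : ℕ) : Finset (Fin n) :=
  if h : i < t then query ⟨i, h⟩ (fun k => origAns g k.1) else ∅

/-- The simulated query function: index `m = 2^k + s` (with `s < 2^k`) queries the
atom of `A k` with sign pattern `s`; index `0` queries the empty set. -/
noncomputable def simQuery : (m : Fin (2 ^ t)) → ((k : Fin m) → ℝ) → Finset (Fin n) :=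
  fun m f =>
    if m.1 = 0 then ∅
    else
      atomSet (origSets query (fun k => if h : k < m.1 then f ⟨k, h⟩ else 0))
        (Nat.log 2 m.1) (m.1 - 2 ^ Nat.log 2 m.1)

variable (D : Fin n → ℝ)

/-- Extended simulated answers. -/
noncomputable def simAns (m : ℕ) : ℝ :=
  if h : m < 2 ^ t then ansRun D (simQuery query) ⟨m, h⟩ else 0

/-- True queried sets of the original run, extended. -/
noncomputable def trueSets (j : ℕ) : Finset (Fin n) :=
  if h : j < t then queriedSet D query ⟨j, h⟩ else ∅

lemma pow_add_lt {k s : ℕ} (hk : k < t) (hs : s < 2 ^ k) : 2 ^ k + s < 2 ^ t := by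
  have h1 : 2 ^ k + s < 2 ^ (k + 1) := by
    have : (2:ℕ) ^ (k+1) = 2 ^ k + 2 ^ k := by ring
    omega
  exact lt_of_lt_of_le h1 (Nat.pow_le_pow_right (by norm_num) hk)

lemma queriedSet_sim_aux {k s : ℕ} (hk : k < t) (hs : s < 2 ^ k)
    (H : ∀ k' (hk' : k' < k),
      ∑ s' ∈ Finset.range (2 ^ k'), simAns query D (2 ^ k' + s')
        = ansRun D query ⟨k', hk'.trans hk⟩) :
    queriedSet D (simQuery query) ⟨2 ^ k + s, pow_add_lt hk hs⟩
      = atomSet (trueSets query D) k s := by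
  have hm0 : 2 ^ k + s ≠ 0 := by positivity
  have hlog : Nat.log 2 (2 ^ k + s) = k := by
    apply Nat.log_eq_of_pow_le_of_lt_pow (Nat.le_add_right _ _)
    have : (2:ℕ) ^ (k+1) = 2 ^ k + 2 ^ k := by ring
    omega
  rw [queriedSet]
  rw [simQuery]
  simp only [hm0, if_false, hlog, Nat.add_sub_cancel_left]
  apply atomSet_congr
  intro j hj
  have hjt : j < t := lt_of_le_of_lt hj hk
  rw [origSets, trueSets, dif_pos hjt, dif_pos hjt, queriedSet]
  congr 1
  funext k'
  have hk'k : k'.1 < k := lt_of_lt_of_le k'.2 hj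
  rw [origAns, ← H k'.1 hk'k]
  apply Finset.sum_congr rfl
  intro s' hs'
  have hlt2 : 2 ^ k'.1 + s' < 2 ^ k + s := by
    have h1 : 2 ^ k'.1 + s' < 2 ^ (k'.1 + 1) := by
      have h2 : s' < 2 ^ k'.1 := Finset.mem_range.1 hs'
      have : (2:ℕ) ^ (k'.1+1) = 2 ^ k'.1 + 2 ^ k'.1 := by ring
      omega
    have h2 : (2:ℕ) ^ (k'.1 + 1) ≤ 2 ^ k := Nat.pow_le_pow_right (by norm_num) hk'k
    omega
  have hlt3 : 2 ^ k'.1 + s' < 2 ^ t := hlt2.trans (pow_add_lt hk hs)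
  rw [simAns, dif_pos hlt2, dif_pos hlt3]

lemma main_lemma : ∀ k, ∀ (hk : k < t),
    ∑ s ∈ Finset.range (2 ^ k), simAns query D (2 ^ k + s) = ansRun D query ⟨k, hk⟩ := by
  intro k
  induction k using Nat.strong_induction_on with
  | _ k IH =>
    intro hk
    have step : ∀ s ∈ Finset.range (2 ^ k),
        simAns query D (2 ^ k + s) = ∑ x ∈ atomSet (trueSets query D) k s, D x := by
      intro s hs
      have hs' := Finset.mem_range.1 hs
      rw [simAns, dif_pos (pow_add_lt hk hs'), ansRun_eq,
        queriedSet_sim_aux query D hk hs' (fun k' hk' => IH k' hk' (hk'.trans hk))]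
    rw [Finset.sum_congr rfl step, sum_atomSet, ansRun_eq]
    congr 1
    rw [trueSets, dif_pos hk]

lemma queriedSet_sim_decode (m : Fin (2 ^ t)) (hm : m.1 ≠ 0) :
    queriedSet D (simQuery query) m
      = atomSet (trueSets query D) (Nat.log 2 m.1) (m.1 - 2 ^ Nat.log 2 m.1) := by
  set k := Nat.log 2 m.1 with hk
  have h1 : 2 ^ k ≤ m.1 := Nat.pow_log_le_self 2 hm
  have h2 : m.1 < 2 ^ (k + 1) := Nat.lt_pow_succ_log_self (by norm_num) m.1
  have hkt : k < t := by
    by_contra h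
    push_neg at h
    exact absurd (lt_of_le_of_lt (le_trans (Nat.pow_le_pow_right (by norm_num) h) h1) m.2)
      (lt_irrefl _)
  have hs : m.1 - 2 ^ k < 2 ^ k := by
    have : (2:ℕ) ^ (k+1) = 2 ^ k + 2 ^ k := by ring
    omega
  have hm_eq : m = ⟨2 ^ k + (m.1 - 2 ^ k), pow_add_lt hkt hs⟩ := by
    apply Fin.ext
    simp
    omega
  conv_lhs => rw [hm_eq]
  exact queriedSet_sim_aux query D hkt hs
    (fun k' hk' => main_lemma query D k' (hk'.trans hkt))

end Stmt17

/-- Any deterministic algorithm making `t` adaptive `SET-EVAL` queries can be simulated by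
an algorithm making at most `2^t` `SET-EVAL` queries all of whose queried sets form a
laminar family: there is an algorithm with `t' ≤ 2^t` queries whose output agrees with the
original algorithm's output on every probability distribution `D`, and whose queried sets
on every such `D` are laminar. -/
theorem stmt_17 {n t : ℕ}
    (query : (i : Fin t) → ((k : Fin i) → ℝ) → Finset (Fin n))
    (output : (Fin t → ℝ) → ℝ) :
    ∃ (t' : ℕ) (query' : (i : Fin t') → ((k : Fin i) → ℝ) → Finset (Fin n))
      (output' : (Fin t' → ℝ) → ℝ),
      t' ≤ 2 ^ t ∧
      ∀ D : Fin n → ℝ, (∀ j, 0 ≤ D j) → (∑ j, D j = 1) →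
        output' (ansRun D query') = output (ansRun D query) ∧
        IsLaminar {S | ∃ i : Fin t', S = queriedSet D query' i} := by
  refine ⟨2 ^ t, Stmt17.simQuery query,
    fun ans => output (fun i => ∑ s ∈ Finset.range (2 ^ i.1),
      if h : 2 ^ i.1 + s < 2 ^ t then ans ⟨2 ^ i.1 + s, h⟩ else 0),
    le_rfl, ?_⟩
  intro D _ _
  constructor
  · show output (fun i => ∑ s ∈ Finset.range (2 ^ i.1),
        Stmt17.simAns query D (2 ^ i.1 + s)) = output (ansRun D query)
    exact congrArg output (funext fun i => Stmt17.main_lemma query D i.1 i.2)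
  · rintro S ⟨m₁, rfl⟩ S' ⟨m₂, rfl⟩
    by_cases h1 : m₁.1 = 0
    · left
      have : queriedSet D (Stmt17.simQuery query) m₁ = ∅ := by
        rw [queriedSet, Stmt17.simQuery]; simp [h1]
      rw [this, Finset.empty_inter]
    by_cases h2 : m₂.1 = 0
    · left
      have : queriedSet D (Stmt17.simQuery query) m₂ = ∅ := by
        rw [queriedSet, Stmt17.simQuery]; simp [h2]
      rw [this, Finset.inter_empty]
    rw [Stmt17.queriedSet_sim_decode query D m₁ h1,
      Stmt17.queriedSet_sim_decode query D m₂ h2]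
    rcases le_total (Nat.log 2 m₁.1) (Nat.log 2 m₂.1) with hle | hle
    · rcases Stmt17.atom_laminar (Stmt17.trueSets query D) hle with h | h
      · exact Or.inl h
      · exact Or.inr (Or.inr h)
    · rcases Stmt17.atom_laminar (Stmt17.trueSets query D) hle with h | h
      · left; rw [Finset.inter_comm]; exact h
      · exact Or.inr (Or.inl h)
end
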